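/- arXiv:2408.04120 — 3 statements merged into one kernel-verified Lean document; each statement's English description precedes it below -/
import Mathlib

section
/- A monomial ideal I ⊆ S is w-stable if and only if it is closed under w-Borel moves; that is, I is w-stable if and only if for every monomial m ∈ I and every monomial u with m ≺_w u, we have u ∈ I. -/
open Finset

/-- A monomial in `n` variables, given by its exponent vector. -/
abbrev Mon (n : ℕ) := Fin n → ℕ

/-- The set of monomials of a monomial ideal: a set of monomials upward closed
under divisibility (i.e. closed under multiplication by monomials). -/
def IsMonIdeal {n : ℕ} (I : Set (Mon n)) : Prop := ∀ a ∈ I, ∀ b, a ≤ b → b ∈ I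

/-- The Borel move sending `m` to `m · y_i / y_j`. -/
def borelMove {n : ℕ} (m : Mon n) (i j : Fin n) : Mon n :=
  fun k => if k = i then m k + 1 else if k = j then m k - 1 else m k

/-- A monomial ideal is strongly stable if it is closed under Borel moves
`m ↦ m · y_i / y_j` for `i < j` and `y_j ∣ m`. -/
def StronglyStable {n : ℕ} (I : Set (Mon n)) : Prop :=
  IsMonIdeal I ∧ ∀ m ∈ I, ∀ i j : Fin n, i < j → 0 < m j → borelMove m i j ∈ I

/-- `borelCl T` : the smallest strongly stable ideal containing the set of monomials `T`. -/
def borelCl {n : ℕ} (T : Set (Mon n)) : Set (Mon n) :=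
  ⋂₀ {J : Set (Mon n) | StronglyStable J ∧ T ⊆ J}

/-- The map `ψ : S → R`, `x_i ↦ y_i^{w_i}`, on exponent vectors. -/
def psi {n : ℕ} (w : Fin n → ℕ) (a : Mon n) : Mon n := fun i => w i * a i

/-- A monomial ideal `I ⊆ S` is `w`-stable if it equals its weighted Borel
closure `ψ⁻¹(Borel(ψ(I)))`. -/
def wStable {n : ℕ} (w : Fin n → ℕ) (I : Set (Mon n)) : Prop :=
  I = psi w ⁻¹' borelCl (psi w '' I)

/-- Total degree of a monomial. -/
def deg {n : ℕ} (m : Mon n) : ℕ := ∑ i, m i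

/-- Weighted degree `deg_w(m) = deg(ψ(m))`. -/
def degW {n : ℕ} (w : Fin n → ℕ) (m : Mon n) : ℕ := ∑ i, w i * m i

/-- `psum m t` : the number of variables (with multiplicity) of index `≤ t`
in the factorization of `m`. -/
def psum {n : ℕ} (m : Mon n) (t : Fin n) : ℕ := ∑ i ∈ Finset.univ.filter (· ≤ t), m i

/-- `psumLt m t` : the number of variables (with multiplicity) of index `< t`. -/
def psumLt {n : ℕ} (m : Mon n) (t : Fin n) : ℕ := ∑ i ∈ Finset.univ.filter (· < t), m i

/-- `precedes u v` : `u ≻ v`, i.e. `u` precedes `v` in the Borel order: writing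
`u = y_{i_1}⋯y_{i_r}`, `v = y_{j_1}⋯y_{j_s}` with increasing indices and `r ≥ s`,
we have `i_k ≤ j_k` for all `k ≤ s`.  Equivalently, for every index `t` the number
of factors of `v` of index `≤ t` is at most that of `u`. -/
def precedes {n : ℕ} (u v : Mon n) : Prop := ∀ t : Fin n, psum v t ≤ psum u t

/-- `max(m)` : the largest (1-based) index of a variable dividing `m` (`0` for `m = 1`). -/
def maxVar {n : ℕ} (m : Mon n) : ℕ :=
  (Finset.univ.filter (fun i => m i ≠ 0)).sup (fun i => i.val + 1)

/-- `max(m)` with the convention `max(1) = 1`. -/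
def maxVarOne {n : ℕ} (m : Mon n) : ℕ := max 1 (maxVar m)

/-- `trunc d m` : the `d`-truncation of a monomial, keeping the first `d`
variables (with multiplicity) of the increasing factorization of `m`
(equal to `m` itself when `d ≥ deg m`). -/
def trunc {n : ℕ} (d : ℕ) (m : Mon n) : Mon n :=
  fun k => min (psum m k) d - min (psumLt m k) d

/-- The `d`-truncation of a monomial ideal: the ideal generated by the
`d`-truncations of all its monomials. -/
def truncIdeal {n : ℕ} (d : ℕ) (J : Set (Mon n)) : Set (Mon n) :=
  {v | ∃ m ∈ J, trunc d m ≤ v}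

/-- `minGens J` : the minimal monomial generators of a monomial ideal, i.e. its
monomials not properly divisible by another monomial of the ideal. -/
def minGens {n : ℕ} (J : Set (Mon n)) : Set (Mon n) :=
  {u ∈ J | ∀ v ∈ J, v ≤ u → v = u}


section Aux
variable {n : ℕ}

lemma psum_le_psum_of_le {a b : Mon n} (h : a ≤ b) (t : Fin n) : psum a t ≤ psum b t :=
  Finset.sum_le_sum fun i _ => h i

lemma psum_mono_right (m : Mon n) {t t' : Fin n} (h : t ≤ t') : psum m t ≤ psum m t' := by
  apply Finset.sum_le_sum_of_subset
  intro k hk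
  simp only [mem_filter, mem_univ, true_and] at *
  exact le_trans hk h

lemma precedes_refl (m : Mon n) : precedes m m := fun _ => le_rfl

lemma sum_ite_filter (c t : Fin n) :
    ∑ k ∈ Finset.univ.filter (· ≤ t), (if k = c then (1:ℕ) else 0) = if c ≤ t then 1 else 0 := by
  rw [Finset.sum_ite_eq']
  simp

lemma borelMove_add {m : Mon n} {i j : Fin n} (hij : i < j) (hj : 0 < m j) (k : Fin n) :
    borelMove m i j k + (if k = j then 1 else 0) = m k + (if k = i then 1 else 0) := by
  unfold borelMove
  by_cases h1 : k = i
  · subst h1; simp [hij.ne]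
  · by_cases h2 : k = j
    · subst h2
      rw [if_neg hij.ne', if_neg hij.ne', if_pos rfl, if_pos rfl]
      omega
    · simp [h1, h2]

lemma psum_borelMove {m : Mon n} {i j : Fin n} (hij : i < j) (hj : 0 < m j) (t : Fin n) :
    psum (borelMove m i j) t + (if j ≤ t then 1 else 0)
      = psum m t + (if i ≤ t then 1 else 0) := by
  unfold psum
  rw [← sum_ite_filter j t, ← sum_ite_filter i t, ← Finset.sum_add_distrib,
    ← Finset.sum_add_distrib]
  exact Finset.sum_congr rfl fun k _ => borelMove_add hij hj k

lemma psum_split (m : Mon n) (i : Fin n) :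
    psum m i = (∑ k ∈ Finset.univ.filter (· < i), m k) + m i := by
  unfold psum
  have h : Finset.univ.filter (· ≤ i) = insert i (Finset.univ.filter (· < i)) := by
    ext k
    simp only [mem_filter, mem_univ, true_and, mem_insert]
    constructor
    · intro h; rcases lt_or_eq_of_le h with h | h
      · exact Or.inr h
      · exact Or.inl h
    · rintro (rfl | h)
      · exact le_rfl
      · exact le_of_lt h
  rw [h, Finset.sum_insert (by simp)]
  omega

lemma psum_stagnate {m : Mon n} {i t : Fin n} (hit : i ≤ t)
    (h : ∀ k, i < k → k ≤ t → m k = 0) : psum m t = psum m i := by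
  refine (Finset.sum_subset ?_ ?_).symm
  · intro k hk
    simp only [mem_filter, mem_univ, true_and] at *
    exact hk.trans hit
  · intro x hx hnx
    simp only [mem_filter, mem_univ, true_and] at hx hnx
    exact h x (lt_of_not_ge hnx) hx

lemma step_lemma {J : Set (Mon n)} (hJ : StronglyStable J) {m v : Mon n}
    (hm : m ∈ J) (hp : precedes v m) (hne : m ≠ v) :
    ∃ m' ∈ J, precedes v m' ∧
      ∑ t, (psum v t - psum m' t) < ∑ t, (psum v t - psum m t) := by
  have hs : (Finset.univ.filter (fun k => m k ≠ v k)).Nonempty := by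
    by_contra h
    apply hne; funext k
    by_contra hk
    exact h ⟨k, by simpa using hk⟩
  set i := (Finset.univ.filter fun k => m k ≠ v k).min' hs with hidef
  have hi : m i ≠ v i := by
    have := Finset.min'_mem _ hs
    simpa [← hidef] using this
  have hpre : ∀ k, k < i → m k = v k := by
    intro k hk
    by_contra hk'
    exact absurd (Finset.min'_le _ k (by simpa using hk')) (not_le.mpr hk)
  have hprefix : ∑ k ∈ Finset.univ.filter (· < i), m k
      = ∑ k ∈ Finset.univ.filter (· < i), v k :=
    Finset.sum_congr rfl fun k hk => hpre k (by simpa using hk)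
  have hlt : psum m i < psum v i := by
    have h1 := hp i
    rw [psum_split m i, psum_split v i] at h1 ⊢
    omega
  suffices h : ∃ m' ∈ J, (∀ t, psum m t ≤ psum m' t) ∧ (∀ t, psum m' t ≤ psum v t)
      ∧ psum m i < psum m' i by
    obtain ⟨m', hm', h1, h2, h3⟩ := h
    refine ⟨m', hm', h2, Finset.sum_lt_sum (fun t _ => by have := h1 t; omega)
      ⟨i, Finset.mem_univ i, by have := h2 i; omega⟩⟩
  by_cases hex : ∃ j, i < j ∧ m j ≠ 0
  · have hs2 : (Finset.univ.filter fun k => i < k ∧ m k ≠ 0).Nonempty := by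
      obtain ⟨j, hj⟩ := hex; exact ⟨j, by simpa using hj⟩
    set j := (Finset.univ.filter fun k => i < k ∧ m k ≠ 0).min' hs2 with hjdef
    have hjm : i < j ∧ m j ≠ 0 := by
      have := Finset.min'_mem _ hs2
      simpa [← hjdef] using this
    obtain ⟨hij, hmj⟩ := hjm
    have hmj' : 0 < m j := Nat.pos_of_ne_zero hmj
    have hjmin : ∀ k, i < k → k < j → m k = 0 := by
      intro k h1 h2
      by_contra hc
      exact absurd (Finset.min'_le _ k (by simp [h1, hc])) (not_le.mpr h2)
    refine ⟨borelMove m i j, hJ.2 m hm i j hij hmj', ?_, ?_, ?_⟩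
    · intro t
      have heq := psum_borelMove hij hmj' t
      have hle : (if j ≤ t then (1:ℕ) else 0) ≤ (if i ≤ t then 1 else 0) := by
        by_cases h2 : j ≤ t
        · simp [h2, le_trans hij.le h2]
        · simp [h2]
      omega
    · intro t
      have heq := psum_borelMove hij hmj' t
      by_cases h1 : i ≤ t
      · by_cases h2 : j ≤ t
        · simp only [h1, h2, if_true] at heq
          have := hp t; omega
        · have h2' : t < j := not_le.mp h2
          have hst : psum m t = psum m i :=
            psum_stagnate h1 (fun k hk1 hk2 => hjmin k hk1 (lt_of_le_of_lt hk2 h2'))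
          have hvv : psum v i ≤ psum v t := psum_mono_right v h1
          simp only [h1, h2, if_true, if_false] at heq
          omega
      · have h2 : ¬ j ≤ t := fun h => h1 (le_trans hij.le h)
        simp only [h1, h2, if_false] at heq
        have := hp t; omega
    · have heq := psum_borelMove hij hmj' i
      simp only [le_refl, if_true, not_le.mpr hij, if_false] at heq
      omega
  · push_neg at hex
    have key : ∀ t, psum (fun k => m k + if k = i then 1 else 0) t
        = psum m t + (if i ≤ t then 1 else 0) := by
      intro t
      unfold psum
      rw [Finset.sum_add_distrib, sum_ite_filter]
    refine ⟨fun k => m k + if k = i then 1 else 0,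
      hJ.1 m hm _ (fun k => Nat.le_add_right _ _), ?_, ?_, ?_⟩
    · intro t; rw [key t]; omega
    · intro t
      rw [key t]
      by_cases h1 : i ≤ t
      · have hst : psum m t = psum m i := psum_stagnate h1 (fun k hk _ => hex k hk)
        have hvv : psum v i ≤ psum v t := psum_mono_right v h1
        simp only [h1, if_true]
        omega
      · simp only [h1, if_false]
        exact hp t
    · rw [key i]
      simp

lemma stronglyStable_mem_of_precedes {J : Set (Mon n)} (hJ : StronglyStable J)
    {m v : Mon n} (hm : m ∈ J) (hp : precedes v m) : v ∈ J := by
  suffices h : ∀ N, ∀ m : Mon n, m ∈ J → precedes v m →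
      (∑ t, (psum v t - psum m t)) ≤ N → v ∈ J from h _ m hm hp le_rfl
  intro N
  induction N with
  | zero =>
    intro m hm hp hN
    by_cases hne : m = v
    · subst hne; exact hm
    · obtain ⟨m', hm', hp', hlt⟩ := step_lemma hJ hm hp hne
      omega
  | succ N ih =>
    intro m hm hp hN
    by_cases hne : m = v
    · subst hne; exact hm
    · obtain ⟨m', hm', hp', hlt⟩ := step_lemma hJ hm hp hne
      exact ih m' hm' hp' (by omega)

lemma subset_borelCl (T : Set (Mon n)) : T ⊆ borelCl T := by
  intro a ha
  intro J hJ
  exact hJ.2 ha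

lemma borelCl_subset {T J : Set (Mon n)} (h1 : StronglyStable J) (h2 : T ⊆ J) :
    borelCl T ⊆ J := fun _ ha => ha J ⟨h1, h2⟩

lemma stronglyStable_borelCl (T : Set (Mon n)) : StronglyStable (borelCl T) := by
  constructor
  · intro a ha b hab J hJ
    exact hJ.1.1 a (ha J hJ) b hab
  · intro m hm i j hij hj J hJ
    exact hJ.1.2 m (hm J hJ) i j hij hj

lemma stronglyStable_jaux (T : Set (Mon n)) :
    StronglyStable {v : Mon n | ∃ m ∈ T, precedes v m} := by
  constructor
  · rintro a ⟨m, hm, hp⟩ b hab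
    exact ⟨m, hm, fun t => (hp t).trans (psum_le_psum_of_le hab t)⟩
  · rintro a ⟨m, hm, hp⟩ i j hij hj
    refine ⟨m, hm, fun t => (hp t).trans ?_⟩
    have heq := psum_borelMove hij hj t
    have hle : (if j ≤ t then (1:ℕ) else 0) ≤ (if i ≤ t then 1 else 0) := by
      by_cases h2 : j ≤ t
      · simp [h2, le_trans hij.le h2]
      · simp [h2]
    omega

end Aux

/-- A monomial ideal `I` is `w`-stable iff it is closed under
`w`-Borel moves: for every `m ∈ I` and every `u` with `m ≺_w u`, also `u ∈ I`. -/
theorem stmt3 {n : ℕ} (w : Fin n → ℕ) (hpos : ∀ i, 0 < w i) (hmono : Antitone w) (I : Set (Mon n)) (hI : IsMonIdeal I) :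
    wStable w I ↔ ∀ m ∈ I, ∀ u : Mon n, precedes (psi w u) (psi w m) → u ∈ I := by
  constructor
  · intro hw m hm u hu
    have h1 : psi w m ∈ borelCl (psi w '' I) := subset_borelCl _ ⟨m, hm, rfl⟩
    have h2 : psi w u ∈ borelCl (psi w '' I) :=
      stronglyStable_mem_of_precedes (stronglyStable_borelCl _) h1 hu
    rw [hw]; exact h2
  · intro h
    apply Set.Subset.antisymm
    · intro a ha
      exact subset_borelCl _ ⟨a, ha, rfl⟩
    · intro a ha
      have hsub : borelCl (psi w '' I) ⊆ {v : Mon n | ∃ m ∈ psi w '' I, precedes v m} :=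
        borelCl_subset (stronglyStable_jaux _) (fun x hx => ⟨x, hx, precedes_refl x⟩)
      obtain ⟨_, ⟨m, hm, rfl⟩, hp⟩ := hsub ha
      exact h m hm a hp
end

section
/- For monomials u, v ∈ S with q = meet_w(u,v), the intersection of the principal w-stable ideals generated by u and by v equals the principal w-stable ideal generated by q: \overline{u} ∩ \overline{v} = \overline{q}. -/
open Finset

/-- The meet of two monomials in the Borel order: if `u = y_{i_1}⋯y_{i_r}` and
`v = y_{j_1}⋯y_{j_s}` with increasing indices and `r ≥ s`, the meet is
`y_{l_1}⋯y_{l_r}` with `l_t = min(i_t, j_t)` for `t ≤ s` and `l_t = i_t` otherwise.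
Equivalently, its partial index-count function is the pointwise max of those of `u` and `v`. -/
def borelMeet {n : ℕ} (u v : Mon n) : Mon n :=
  fun k => max (psum u k) (psum v k) - max (psumLt u k) (psumLt v k)

lemma psumLt_le_psum {n : ℕ} (m : Mon n) (t : Fin n) : psumLt m t ≤ psum m t := by
  apply Finset.sum_le_sum_of_subset
  intro i hi
  simp only [Finset.mem_filter, Finset.mem_univ, true_and] at hi ⊢
  exact le_of_lt hi

lemma psum_split_s5 {n : ℕ} (m : Mon n) (t : Fin n) : psum m t = psumLt m t + m t := by
  unfold psum psumLt
  rw [show univ.filter (· ≤ t) = insert t (univ.filter (· < t)) by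
    ext i
    simp only [Finset.mem_filter, Finset.mem_univ, true_and, Finset.mem_insert, Fin.le_def,
      Fin.lt_def, Fin.ext_iff]
    omega]
  rw [Finset.sum_insert (by simp)]
  omega

lemma psumLt_zero {n : ℕ} (m : Mon n) {t : Fin n} (ht : t.val = 0) : psumLt m t = 0 := by
  unfold psumLt
  rw [Finset.filter_false_of_mem, Finset.sum_empty]
  intro i _
  simp only [Fin.lt_def]
  omega

lemma psumLt_succ {n : ℕ} (m : Mon n) {t : Fin n} {s : ℕ} (ht : t.val = s + 1) (hs : s < n) :
    psumLt m t = psum m ⟨s, hs⟩ := by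
  unfold psumLt psum
  congr 1
  ext i
  simp only [Finset.mem_filter, Finset.mem_univ, true_and, Fin.lt_def, Fin.le_def]
  omega

lemma psum_mono_t {n : ℕ} (m : Mon n) {t t' : Fin n} (h : t ≤ t') : psum m t ≤ psum m t' := by
  apply Finset.sum_le_sum_of_subset
  intro i hi
  simp only [Finset.mem_filter, Finset.mem_univ, true_and] at hi ⊢
  exact le_trans hi h

lemma eq_of_psum_eq {n : ℕ} {m m' : Mon n} (h : ∀ t, psum m t = psum m' t) : m = m' := by
  have hlt : ∀ t, psumLt m t = psumLt m' t := by
    intro t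
    cases ht : t.val with
    | zero => rw [psumLt_zero m ht, psumLt_zero m' ht]
    | succ s =>
      have hs : s < n := by have := t.isLt; omega
      rw [psumLt_succ m ht hs, psumLt_succ m' ht hs, h]
  funext k
  have h1 := psum_split_s5 m k
  have h2 := psum_split_s5 m' k
  have := h k
  have := hlt k
  omega

lemma psum_meet {n : ℕ} (u v : Mon n) (t : Fin n) :
    psum (borelMeet u v) t = max (psum u t) (psum v t) := by
  suffices H : ∀ s : ℕ, ∀ t : Fin n, t.val = s →
      psum (borelMeet u v) t = max (psum u t) (psum v t) from H t.val t rfl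
  intro s
  induction s with
  | zero =>
    intro t ht
    have h1 := psum_split_s5 (borelMeet u v) t
    have h2 := psumLt_zero (borelMeet u v) ht
    have h3 := psumLt_zero u ht
    have h4 := psumLt_zero v ht
    have h5 : borelMeet u v t = max (psum u t) (psum v t) - max (psumLt u t) (psumLt v t) := rfl
    omega
  | succ s ih =>
    intro t ht
    have hs : s < n := by have := t.isLt; omega
    have h1 := psum_split_s5 (borelMeet u v) t
    have h2 := psumLt_succ (borelMeet u v) ht hs
    have h3 := psumLt_succ u ht hs
    have h4 := psumLt_succ v ht hs
    have h5 : borelMeet u v t = max (psum u t) (psum v t) - max (psumLt u t) (psumLt v t) := rfl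
    have h6 := ih ⟨s, hs⟩ rfl
    have h7 := psumLt_le_psum u t
    have h8 := psumLt_le_psum v t
    omega

lemma sum_ite_mem {n : ℕ} (x t : Fin n) :
    (∑ k ∈ univ.filter (· ≤ t), (if k = x then (1:ℕ) else 0)) = if x ≤ t then 1 else 0 := by
  rw [Finset.sum_ite_eq']
  simp

lemma psum_shift {n : ℕ} {f g : Mon n} {i j : Fin n}
    (h : ∀ k, f k + (if k = j then 1 else 0) = g k + (if k = i then 1 else 0)) (t : Fin n) :
    psum f t + (if j ≤ t then 1 else 0) = psum g t + (if i ≤ t then 1 else 0) := by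
  have H : (∑ k ∈ univ.filter (· ≤ t), (f k + if k = j then 1 else 0))
      = (∑ k ∈ univ.filter (· ≤ t), (g k + if k = i then 1 else 0)) :=
    Finset.sum_congr rfl (fun k _ => h k)
  rw [Finset.sum_add_distrib, Finset.sum_add_distrib, sum_ite_mem, sum_ite_mem] at H
  exact H

lemma psum_dec {n : ℕ} {f g : Mon n} {j : Fin n}
    (h : ∀ k, f k + (if k = j then 1 else 0) = g k) (t : Fin n) :
    psum f t + (if j ≤ t then 1 else 0) = psum g t := by
  have H : (∑ k ∈ univ.filter (· ≤ t), (f k + if k = j then 1 else 0))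
      = (∑ k ∈ univ.filter (· ≤ t), g k) :=
    Finset.sum_congr rfl (fun k _ => h k)
  rw [Finset.sum_add_distrib, sum_ite_mem] at H
  exact H

lemma psum_eq_of_zero_between {n : ℕ} (m : Mon n) {t t' : Fin n} (htt : t ≤ t')
    (hz : ∀ k : Fin n, t < k → k ≤ t' → m k = 0) : psum m t = psum m t' := by
  unfold psum
  apply Finset.sum_subset
  · intro i hi
    simp only [Finset.mem_filter, Finset.mem_univ, true_and] at hi ⊢
    exact le_trans hi htt
  · intro k hk hnk
    simp only [Finset.mem_filter, Finset.mem_univ, true_and] at hk hnk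
    exact hz k (lt_of_not_ge hnk) hk

lemma mem_of_precedes {n : ℕ} {J : Set (Mon n)} (hJ : StronglyStable J) {a : Mon n} (ha : a ∈ J)
    (m : Mon n) (hm : precedes m a) : m ∈ J := by
  suffices H : ∀ N : ℕ, ∀ m : Mon n, (∑ t, (psum m t - psum a t)) = N → precedes m a → m ∈ J from
    H _ m rfl hm
  intro N
  induction N using Nat.strong_induction_on with
  | _ N ih =>
    intro m hN hm
    by_cases hall : ∀ t, psum m t = psum a t
    · rwa [eq_of_psum_eq hall]
    push_neg at hall
    obtain ⟨t0, ht0ne⟩ := hall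
    have ht0 : psum a t0 < psum m t0 := lt_of_le_of_ne (hm t0) (Ne.symm ht0ne)
    have hn : 0 < n := t0.pos
    set L : Fin n := ⟨n - 1, by omega⟩ with hL
    have hleL : ∀ t : Fin n, t ≤ L := by
      intro t
      have := t.isLt
      rw [Fin.le_def]
      simp only [hL]
      omega
    -- a nonzero entry of m at index ≤ t0
    have hex : ∃ k : Fin n, k ≤ t0 ∧ 0 < m k := by
      by_contra hc
      push_neg at hc
      have : psum m t0 = 0 := Finset.sum_eq_zero (fun k hk => by
        simp only [Finset.mem_filter, Finset.mem_univ, true_and] at hk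
        have := hc k hk
        omega)
      omega
    by_cases hdeg : psum m L = psum a L
    · -- equal degrees: reverse Borel move
      have ht0L : t0 < L := by
        rcases lt_or_eq_of_le (hleL t0) with h | h
        · exact h
        · rw [h] at ht0; omega
      -- choose j minimal with t0 < j and psum m j ≤ psum a j
      have hSj : (univ.filter fun x => t0 < x ∧ psum m x ≤ psum a x).Nonempty :=
        ⟨L, by simp [ht0L, hdeg.le]⟩
      set j := (univ.filter fun x => t0 < x ∧ psum m x ≤ psum a x).min' hSj with hjdef
      have hjmem : t0 < j ∧ psum m j ≤ psum a j := by
        have h := Finset.min'_mem _ hSj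
        simp only [Finset.mem_filter, Finset.mem_univ, true_and] at h
        exact h
      have hjmin : ∀ x : Fin n, t0 < x → psum m x ≤ psum a x → j ≤ x := fun x h1 h2 =>
        Finset.min'_le _ x (by simp [h1, h2])
      have hstrict0 : ∀ t : Fin n, t0 ≤ t → t < j → psum a t < psum m t := by
        intro t h1 h2
        rcases lt_or_eq_of_le h1 with h | h
        · by_contra hc
          push_neg at hc
          exact absurd (hjmin t h hc) (not_le.mpr h2)
        · rw [← h]; exact ht0
      -- choose i maximal with i < j and 0 < m i
      have hSi : (univ.filter fun x => x < j ∧ 0 < m x).Nonempty := by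
        obtain ⟨k, hk1, hk2⟩ := hex
        exact ⟨k, by simp [lt_of_le_of_lt hk1 hjmem.1, hk2]⟩
      set i := (univ.filter fun x => x < j ∧ 0 < m x).max' hSi with hidef
      have himem : i < j ∧ 0 < m i := by
        have h := Finset.max'_mem _ hSi
        simp only [Finset.mem_filter, Finset.mem_univ, true_and] at h
        exact h
      have himax : ∀ x : Fin n, x < j → 0 < m x → x ≤ i := fun x h1 h2 =>
        Finset.le_max' _ x (by simp [h1, h2])
      have hzero : ∀ k : Fin n, i < k → k < j → m k = 0 := by
        intro k h1 h2
        by_contra hc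
        exact absurd (himax k h2 (Nat.pos_of_ne_zero hc)) (not_le.mpr h1)
      have hstrict : ∀ t : Fin n, i ≤ t → t < j → psum a t < psum m t := by
        intro t h1 h2
        rcases le_or_gt t0 t with h | h
        · exact hstrict0 t h h2
        · have heq : psum m t = psum m t0 :=
            psum_eq_of_zero_between m h.le (fun k hk1 hk2 =>
              hzero k (lt_of_le_of_lt h1 hk1) (lt_of_le_of_lt hk2 hjmem.1))
          calc psum a t ≤ psum a t0 := psum_mono_t a h.le
            _ < psum m t0 := ht0
            _ = psum m t := heq.symm
      have hij : i < j := himem.1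
      set m' : Mon n := fun k => if k = i then m k - 1 else if k = j then m k + 1 else m k
        with hm'def
      have hid : ∀ k, m' k + (if k = i then 1 else 0) = m k + (if k = j then 1 else 0) := by
        intro k
        have hmi : 0 < m i := himem.2
        simp only [hm'def]
        by_cases h1 : k = i
        · subst h1; simp [hij.ne]; omega
        · by_cases h2 : k = j
          · subst h2; simp [hij.ne', h1]
          · simp [h1, h2]
      have hps := psum_shift hid
      have hprec' : precedes m' a := by
        intro t
        have h1 := hps t
        by_cases hit : i ≤ t
        · by_cases hjt : j ≤ t
          · have := hm t; simp [hit, hjt] at h1; omega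
          · have := hstrict t hit (lt_of_not_ge hjt)
            simp [hit, hjt] at h1; omega
        · have hjt : ¬ j ≤ t := fun h => hit (le_trans hij.le h)
          have := hm t; simp [hit, hjt] at h1; omega
      have hlt : (∑ t, (psum m' t - psum a t)) < N := by
        rw [← hN]
        apply Finset.sum_lt_sum
        · intro t _
          have h1 := hps t
          have hji : j ≤ t → i ≤ t := fun h => le_trans hij.le h
          by_cases hit : i ≤ t <;> by_cases hjt : j ≤ t <;> simp [hit, hjt] at h1 <;> omega
        · refine ⟨i, Finset.mem_univ i, ?_⟩
          have h1 := hps i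
          have hji : ¬ j ≤ i := not_le.mpr hij
          have h2 := hstrict i le_rfl hij
          simp [hji] at h1
          omega
      have hm'J : m' ∈ J := ih _ hlt m' rfl hprec'
      have hmove : m = borelMove m' i j := by
        funext k
        have hmi : 0 < m i := himem.2
        simp only [borelMove, hm'def]
        by_cases h1 : k = i
        · subst h1; simp [hij.ne]; omega
        · by_cases h2 : k = j
          · subst h2; simp [hij.ne', h1]
          · simp [h1, h2]
      rw [hmove]
      exact hJ.2 m' hm'J i j hij (by simp [hm'def, hij.ne'])
    · -- strictly bigger degree: drop the top variable
      have hdeg' : psum a L < psum m L := lt_of_le_of_ne (hm L) (Ne.symm hdeg)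
      have hSj : (univ.filter fun x => 0 < m x).Nonempty := by
        obtain ⟨k, _, hk2⟩ := hex
        exact ⟨k, by simp [hk2]⟩
      set j := (univ.filter fun x => 0 < m x).max' hSj with hjdef
      have hjmem : 0 < m j := by
        have h := Finset.max'_mem _ hSj
        simp only [Finset.mem_filter, Finset.mem_univ, true_and] at h
        exact h
      have hjmax : ∀ x : Fin n, 0 < m x → x ≤ j := fun x h2 =>
        Finset.le_max' _ x (by simp [h2])
      set m' : Mon n := fun k => if k = j then m k - 1 else m k with hm'def
      have hid : ∀ k, m' k + (if k = j then 1 else 0) = m k := by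
        intro k
        simp only [hm'def]
        split_ifs with h1
        · subst h1; omega
        · omega
      have hps := psum_dec hid
      have htop : ∀ t : Fin n, j ≤ t → psum m t = psum m L := by
        intro t ht
        apply psum_eq_of_zero_between m (hleL t)
        intro k hk1 _
        by_contra hc
        exact absurd (hjmax k (Nat.pos_of_ne_zero hc)) (not_le.mpr (lt_of_le_of_lt ht hk1))
      have hprec' : precedes m' a := by
        intro t
        have h1 := hps t
        by_cases hjt : j ≤ t
        · have h2 := htop t hjt
          have h3 : psum a t ≤ psum a L := psum_mono_t a (hleL t)
          simp [hjt] at h1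
          omega
        · have := hm t; simp [hjt] at h1; omega
      have hlt : (∑ t, (psum m' t - psum a t)) < N := by
        rw [← hN]
        apply Finset.sum_lt_sum
        · intro t _
          have h1 := hps t
          by_cases hjt : j ≤ t <;> simp [hjt] at h1 <;> omega
        · refine ⟨L, Finset.mem_univ L, ?_⟩
          have h1 := hps L
          simp [hleL j] at h1
          omega
      have hm'J : m' ∈ J := ih _ hlt m' rfl hprec'
      apply hJ.1 m' hm'J
      intro k
      have := hid k
      by_cases h : k = j <;> simp [h] at this ⊢ <;> omega

lemma psum_mono_m {n : ℕ} {m m' : Mon n} (h : m ≤ m') (t : Fin n) : psum m t ≤ psum m' t :=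
  Finset.sum_le_sum (fun i _ => h i)

lemma stronglyStable_precedes {n : ℕ} (a : Mon n) : StronglyStable {m | precedes m a} := by
  constructor
  · intro m hm b hb t
    exact le_trans (hm t) (psum_mono_m hb t)
  · intro m hm i j hij hj t
    refine le_trans (hm t) ?_
    have hid : ∀ k, borelMove m i j k + (if k = j then 1 else 0)
        = m k + (if k = i then 1 else 0) := by
      intro k
      unfold borelMove
      by_cases h1 : k = i
      · subst h1; simp [hij.ne]
      · by_cases h2 : k = j
        · subst h2; simp [hij.ne', h1]; omega
        · simp [h1, h2]
    have h1 := psum_shift hid t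
    have hji : j ≤ t → i ≤ t := fun h => le_trans hij.le h
    by_cases hit : i ≤ t <;> by_cases hjt : j ≤ t <;> simp [hit, hjt] at h1 <;> omega

lemma borelCl_singleton {n : ℕ} (a : Mon n) : borelCl {a} = {m | precedes m a} := by
  apply subset_antisymm
  · apply Set.sInter_subset_of_mem
    exact ⟨stronglyStable_precedes a, by
      intro x hx
      rw [Set.mem_singleton_iff] at hx
      subst hx
      exact fun t => le_rfl⟩
  · intro m hm
    rw [borelCl, Set.mem_sInter]
    rintro J ⟨hJ, haJ⟩
    exact mem_of_precedes hJ (haJ rfl) m hm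

/-- For monomials `u, v ∈ S` with `q = meet_w(u,v)` (i.e.
`ψ(q) = meet_Borel(ψ(u),ψ(v))`), we have `\overline{u} ∩ \overline{v} = \overline{q}`. -/
theorem stmt5 {n : ℕ} (w : Fin n → ℕ) (hpos : ∀ i, 0 < w i) (hmono : Antitone w) (u v q : Mon n)
    (hq : psi w q = borelMeet (psi w u) (psi w v)) :
    (psi w ⁻¹' borelCl {psi w u}) ∩ (psi w ⁻¹' borelCl {psi w v})
      = psi w ⁻¹' borelCl {psi w q} := by
  have hM : ∀ t, psum (psi w q) t = max (psum (psi w u) t) (psum (psi w v) t) := by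
    intro t
    rw [hq]
    exact psum_meet _ _ t
  ext m
  simp only [Set.mem_inter_iff, Set.mem_preimage, borelCl_singleton, Set.mem_setOf_eq, precedes]
  constructor
  · rintro ⟨h1, h2⟩ t
    rw [hM t]
    exact max_le (h1 t) (h2 t)
  · intro h
    constructor <;> intro t <;> have := h t <;> rw [hM t] at this
    · exact le_trans (le_max_left _ _) this
    · exact le_trans (le_max_right _ _) this
end

section
/- Fix a weight vector w and monomial m ∈ S. For 1 ≤ a ≤ deg_w(m), the entry C_{w,m}(a,b) of the weighted Catalan diagram equals q_b^a of the ideal ψ^{-1}(trunc_a(Borel(ψ(m)))), i.e., the number of degree-a minimal monomial generators of ψ^{-1}(trunc_a(Borel(ψ(m)))) whose maximal variable index is b. -/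
open Finset

/-- The weighted Catalan diagram `C_{w,m}(a,b)` (column `b : Fin n` corresponds to
the 1-based column `b+1`): `C(0,1) = 1` and
`C(a,b) = Σ_{k=1}^b C(a-w_b,k)` when `0 ≤ a - w_b < deg_w(m)` and
`max(trunc_{a-w_b+1}(ψ(m))) ≥ b`, and `0` otherwise.  (The guard `0 < w b` is
automatic for a weight vector and ensures termination.) -/
def catalanEntry {n : ℕ} (w : Fin n → ℕ) (m : Mon n) : ℕ → Fin n → ℕ
  | 0, b => if b.val = 0 then 1 else 0
  | (a+1), b =>
      if h : 0 < w b ∧ w b ≤ a + 1 ∧ a + 1 - w b < degW w m ∧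
             b.val + 1 ≤ maxVar (trunc (a + 1 - w b + 1) (psi w m)) then
        ∑ k ∈ Finset.univ.filter (· ≤ b), catalanEntry w m (a + 1 - w b) k
      else 0
  termination_by a _ => a
  decreasing_by exact Nat.sub_lt (Nat.succ_pos a) h.1

section Basics
variable {n : ℕ}

/-- ℕ-indexed partial sum: sum of `m i` over `i.val < t`. -/
def Psum (m : Mon n) (t : ℕ) : ℕ := ∑ i ∈ Finset.univ.filter (fun i : Fin n => i.val < t), m i

lemma Psum_zero (m : Mon n) : Psum m 0 = 0 := by simp [Psum]

lemma Psum_succ (m : Mon n) (t : ℕ) (h : t < n) : Psum m (t+1) = Psum m t + m ⟨t, h⟩ := by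
  unfold Psum
  have hins : Finset.univ.filter (fun i : Fin n => i.val < t+1)
      = insert ⟨t,h⟩ (Finset.univ.filter (fun i : Fin n => i.val < t)) := by
    ext i
    simp only [Finset.mem_insert, Finset.mem_filter, Finset.mem_univ, true_and, Fin.ext_iff]
    omega
  rw [hins, Finset.sum_insert (by simp)]
  ring

lemma Psum_mono (m : Mon n) : Monotone (Psum m) := by
  intro s t hst
  exact Finset.sum_le_sum_of_subset (by intro i; simp; omega)

lemma Psum_stab (m : Mon n) (t : ℕ) (h : n ≤ t) : Psum m t = deg m := by
  unfold Psum deg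
  congr 1
  apply Finset.filter_true_of_mem
  intro i _
  exact lt_of_lt_of_le i.isLt h

lemma Psum_le_deg (m : Mon n) (t : ℕ) : Psum m t ≤ deg m := by
  rcases le_or_gt n t with h | h
  · rw [Psum_stab m t h]
  · rw [← Psum_stab m n le_rfl]; exact Psum_mono m h.le

lemma psum_eq (m : Mon n) (t : Fin n) : psum m t = Psum m (t.val+1) := by
  unfold psum Psum
  congr 1
  ext i
  simp only [Finset.mem_filter, Finset.mem_univ, true_and, Fin.le_def]
  omega

lemma psumLt_eq (m : Mon n) (t : Fin n) : psumLt m t = Psum m t.val := by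
  unfold psumLt Psum
  congr 1

lemma apply_eq_Psum (m : Mon n) (i : Fin n) : m i = Psum m (i.val+1) - Psum m i.val := by
  have h : Psum m (i.val+1) = Psum m i.val + m i := Psum_succ m i.val i.isLt
  omega

lemma trunc_apply (d : ℕ) (m : Mon n) (i : Fin n) :
    trunc d m i = min (Psum m (i.val+1)) d - min (Psum m i.val) d := by
  unfold trunc
  rw [psum_eq, psumLt_eq]

lemma Psum_trunc (d : ℕ) (m : Mon n) (t : ℕ) : Psum (trunc d m) t = min (Psum m t) d := by
  induction t with
  | zero => simp [Psum_zero]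
  | succ t ih =>
    by_cases h : t < n
    · rw [Psum_succ _ t h, trunc_apply]
      simp only [Fin.val_mk]
      rw [ih]
      have h2 : Psum m (t+1) = Psum m t + m ⟨t, h⟩ := Psum_succ m t h
      omega
    · have hn : n ≤ t := le_of_not_gt h
      rw [Psum_stab _ _ (hn.trans (Nat.le_succ t)), ← Psum_stab (trunc d m) t hn, ih,
        Psum_stab m t hn, Psum_stab m (t+1) (hn.trans (Nat.le_succ t))]

lemma deg_eq_Psum (m : Mon n) : deg m = Psum m n := (Psum_stab m n le_rfl).symm

lemma Psum_le_Psum_of_le {u v : Mon n} (h : u ≤ v) (t : ℕ) : Psum u t ≤ Psum v t :=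
  Finset.sum_le_sum (fun i _ => h i)

lemma le_maxVar_iff (m : Mon n) (s : ℕ) :
    s + 1 ≤ maxVar m ↔ ∃ i : Fin n, s ≤ i.val ∧ m i ≠ 0 := by
  unfold maxVar
  rw [Finset.le_sup_iff (Nat.succ_pos s)]
  constructor
  · rintro ⟨i, hi, hle⟩
    simp at hi
    exact ⟨i, by omega, hi⟩
  · rintro ⟨i, hi, hne⟩
    exact ⟨i, by simpa using hne, by omega⟩

lemma maxVar_le_iff (m : Mon n) (s : ℕ) :
    maxVar m ≤ s ↔ ∀ i : Fin n, m i ≠ 0 → i.val + 1 ≤ s := by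
  unfold maxVar
  rw [Finset.sup_le_iff]
  simp

end Basics
section Borel
variable {n : ℕ}

lemma mem_borelCl_iff {T : Set (Mon n)} {u : Mon n} :
    u ∈ borelCl T ↔ ∀ J : Set (Mon n), StronglyStable J → T ⊆ J → u ∈ J := by
  simp only [borelCl, Set.mem_sInter, Set.mem_setOf_eq, and_imp]

lemma Psum_borelMove_int (m : Mon n) (i j : Fin n) (hij : i ≠ j) (hj : 0 < m j) (t : ℕ) :
    (Psum (borelMove m i j) t : ℤ)
      = (Psum m t : ℤ) + (if i.val < t then 1 else 0) - (if j.val < t then 1 else 0) := by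
  unfold Psum
  push_cast
  have hterm : ∀ k ∈ Finset.univ.filter (fun i : Fin n => i.val < t),
      (borelMove m i j k : ℤ) = (m k : ℤ) + (if k = i then 1 else 0) - (if k = j then 1 else 0) := by
    intro k _
    unfold borelMove
    split_ifs with h1 h2 <;> subst_vars <;> simp_all <;> omega
  rw [Finset.sum_congr rfl hterm]
  rw [Finset.sum_sub_distrib, Finset.sum_add_distrib, Finset.sum_ite_eq', Finset.sum_ite_eq']
  simp only [Finset.mem_filter, Finset.mem_univ, true_and]

lemma Psum_borelMove_ge (m : Mon n) (i j : Fin n) (hij : i < j) (hj : 0 < m j) (t : ℕ) :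
    Psum m t ≤ Psum (borelMove m i j) t := by
  have h := Psum_borelMove_int m i j hij.ne hj t
  have hij' : j.val < t → i.val < t := fun h' => lt_trans hij h'
  split_ifs at h <;> omega

lemma stronglyStable_psumSet (P : ℕ → ℕ) :
    StronglyStable {u : Mon n | ∀ t, P t ≤ Psum u t} := by
  constructor
  · intro a ha b hab t
    exact (ha t).trans (Psum_le_Psum_of_le hab t)
  · intro u hu i j hij hj t
    exact (hu t).trans (Psum_borelMove_ge u i j hij hj t)

lemma exists_support_of_Psum_lt (m : Mon n) {s t : ℕ}
    (h : Psum m s < Psum m t) : ∃ r : ℕ, ∃ hr : r < n, s ≤ r ∧ m ⟨r, hr⟩ ≠ 0 := by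
  by_contra hcon
  push_neg at hcon
  have key : ∀ r, Psum m (s + r) = Psum m s := by
    intro r
    induction r with
    | zero => rfl
    | succ r ih =>
      by_cases hr : s + r < n
      · rw [show s + (r+1) = (s+r)+1 by ring, Psum_succ m (s+r) hr]
        have := hcon (s+r) hr (Nat.le_add_right s r)
        omega
      · rw [show s + (r+1) = (s+r)+1 by ring,
          Psum_stab m ((s+r)+1) (by omega), ← Psum_stab m (s+r) (by omega), ih]
  rcases le_or_gt t s with hts | hst
  · exact absurd (Psum_mono m hts) (by omega)
  · have := key (t - s)
    rw [show s + (t-s) = t by omega] at this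
    omega

lemma eq_of_Psum_eq {u v : Mon n} (h : ∀ t, Psum u t = Psum v t) : u = v := by
  funext i
  rw [apply_eq_Psum u i, apply_eq_Psum v i, h, h]

lemma chain_aux : ∀ D : ℕ, ∀ u M : Mon n,
    (∑ t ∈ Finset.range (n+1), (Psum u t - Psum M t)) = D →
    deg u = deg M → (∀ t, Psum M t ≤ Psum u t) → u ∈ borelCl {M} := by
  intro D
  induction D using Nat.strong_induction_on with
  | _ D IH =>
    intro u M hD hdeg hprec
    by_cases heq : ∀ t, Psum u t = Psum M t
    · have : u = M := eq_of_Psum_eq heq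
      subst this
      rw [mem_borelCl_iff]
      intro J _ hTJ
      exact hTJ rfl
    · push_neg at heq
      have hex : ∃ t, Psum M t < Psum u t := by
        obtain ⟨t, ht⟩ := heq
        exact ⟨t, lt_of_le_of_ne (hprec t) (Ne.symm ht)⟩
      classical
      set t0 := Nat.find hex with ht0def
      have ht0 : Psum M t0 < Psum u t0 := Nat.find_spec hex
      have ht0min : ∀ s < t0, Psum u s = Psum M s := by
        intro s hs
        have := Nat.find_min hex hs
        have := hprec s
        omega
      have ht0pos : 1 ≤ t0 := by
        rcases Nat.eq_zero_or_pos t0 with h0 | h0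
        · rw [h0] at ht0; rw [Psum_zero, Psum_zero] at ht0; omega
        · exact h0
      have ht0n : t0 < n := by
        by_contra hcon
        push_neg at hcon
        rw [Psum_stab M t0 hcon, Psum_stab u t0 hcon, hdeg] at ht0
        omega
      -- find j : minimal support position ≥ t0
      have hdeg' : Psum M t0 < Psum M n := by
        have h1 : Psum u t0 ≤ Psum u n := Psum_mono u (by omega)
        rw [← deg_eq_Psum, hdeg, deg_eq_Psum] at h1
        omega
      -- extend M to ℕ-indexed to ease finding minimal support position
      set Mx : ℕ → ℕ := fun r => if hr : r < n then M ⟨r, hr⟩ else 0 with hMx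
      have hjex : ∃ r : ℕ, t0 ≤ r ∧ Mx r ≠ 0 := by
        obtain ⟨r, hr, h1, h2⟩ := exists_support_of_Psum_lt M hdeg'
        exact ⟨r, h1, by simp only [hMx]; rw [dif_pos hr]; exact h2⟩
      set s0 := Nat.find hjex with hs0def
      have hspec : t0 ≤ s0 ∧ Mx s0 ≠ 0 := Nat.find_spec hjex
      obtain ⟨hs0ge, hs0ne⟩ := hspec
      have hs0n : s0 < n := by
        by_contra hcon
        push_neg at hcon
        exact hs0ne (by simp only [hMx]; rw [dif_neg (by omega)])
      have hs0min : ∀ s, t0 ≤ s → s < s0 → Mx s = 0 := by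
        intro s h1 h2
        have := Nat.find_min hjex h2
        simp only [h1, true_and] at this
        exact not_not.mp this
      -- the borel move
      set i : Fin n := ⟨t0 - 1, by omega⟩ with hi
      set j : Fin n := ⟨s0, hs0n⟩ with hj
      have hijlt : i < j := by
        rw [hi, hj, Fin.mk_lt_mk]
        omega
      have hMj : 0 < M j := by
        have h1 : Mx s0 = M ⟨s0, hs0n⟩ := by rw [hMx]; exact dif_pos hs0n
        rw [hj]
        omega
      set M' := borelMove M i j with hM'
      have hPsumM' : ∀ t, (Psum M' t : ℤ)
          = (Psum M t : ℤ) + (if t0 ≤ t then 1 else 0) - (if s0 < t then 1 else 0) := by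
        intro t
        have h := Psum_borelMove_int M i j hijlt.ne hMj t
        have hival : i.val = t0 - 1 := by rw [hi]
        have hjval : j.val = s0 := by rw [hj]
        rw [hival, hjval] at h
        rw [← hM'] at h
        rw [h]
        split_ifs <;> omega
      -- Psum M is flat on [t0, s0]
      have hflat : ∀ t, t0 ≤ t → t ≤ s0 → Psum M t = Psum M t0 := by
        intro t h1 h2
        induction t with
        | zero => omega
        | succ t ih =>
          rcases Nat.lt_or_ge t0 (t+1) with h3 | h3
          · have h4 : t0 ≤ t := by omega
            have h5 : t < n := by omega
            rw [Psum_succ M t h5]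
            have h6 : M ⟨t, h5⟩ = 0 := by
              have := hs0min t h4 (by omega)
              simp only [hMx] at this
              rwa [dif_pos h5] at this
            rw [h6, ih h4 (by omega)]
            omega
          · have : t0 = t + 1 := by omega
            rw [this]
      have hprec' : ∀ t, Psum M' t ≤ Psum u t := by
        intro t
        have h := hPsumM' t
        rcases lt_or_ge t t0 with h1 | h1
        · rw [if_neg (by omega), if_neg (by omega)] at h
          have := hprec t
          omega
        · rcases le_or_gt t s0 with h2 | h2
          · rw [if_pos h1, if_neg (by omega)] at h
            have h3 : Psum M t = Psum M t0 := hflat t h1 h2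
            have h4 : Psum u t0 ≤ Psum u t := Psum_mono u h1
            omega
          · rw [if_pos h1, if_pos h2] at h
            have := hprec t
            omega
      have hprec'' : ∀ t, Psum M t ≤ Psum M' t := by
        intro t
        have h := hPsumM' t
        split_ifs at h <;> omega
      have hdegM' : deg M' = deg M := by
        rw [deg_eq_Psum, deg_eq_Psum]
        have h := hPsumM' n
        rw [if_pos (by omega), if_pos (by omega)] at h
        omega
      -- strict decrease
      have hstrict : Psum M t0 < Psum M' t0 := by
        have h := hPsumM' t0
        rw [if_pos le_rfl, if_neg (by omega)] at h
        omega
      have hlt : (∑ t ∈ Finset.range (n+1), (Psum u t - Psum M' t)) < D := by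
        rw [← hD]
        apply Finset.sum_lt_sum
        · intro t _
          have := hprec'' t
          omega
        · refine ⟨t0, Finset.mem_range.mpr (by omega), ?_⟩
          have h1 := hprec' t0
          omega
      have hIH := IH _ hlt u M' rfl (hdeg.trans hdegM'.symm) hprec'
      rw [mem_borelCl_iff]
      intro J hJ hTJ
      have hMJ : M ∈ J := hTJ rfl
      have hM'J : M' ∈ J := hJ.2 M hMJ i j hijlt hMj
      exact mem_borelCl_iff.mp hIH J hJ (Set.singleton_subset_iff.mpr hM'J)

lemma mem_borelCl_of_prec {u M : Mon n} (hdeg : deg u = deg M)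
    (hprec : ∀ t, Psum M t ≤ Psum u t) : u ∈ borelCl {M} :=
  chain_aux _ u M rfl hdeg hprec

lemma borelCl_prec {M u : Mon n} (hu : u ∈ borelCl {M}) (t : ℕ) : Psum M t ≤ Psum u t := by
  have := mem_borelCl_iff.mp hu {v : Mon n | ∀ s, Psum M s ≤ Psum v s}
    (stronglyStable_psumSet _) (Set.singleton_subset_iff.mpr (fun s => le_rfl))
  exact this t

end Borel
section Trunc
variable {n : ℕ}

lemma trunc_le' (d : ℕ) (m : Mon n) : trunc d m ≤ m := by
  intro i
  show trunc d m i ≤ m i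
  rw [trunc_apply]
  have h : Psum m (i.val+1) = Psum m i.val + m i := Psum_succ m i.val i.isLt
  omega

lemma truncIdeal_eq (M : Mon n) (a : ℕ) (ha : a ≤ deg M) :
    truncIdeal a (borelCl {M}) = {v : Mon n | ∀ t, min (Psum M t) a ≤ Psum v t} := by
  ext v
  constructor
  · rintro ⟨z, hz, hle⟩ t
    have h1 : Psum M t ≤ Psum z t := borelCl_prec hz t
    have h2 : Psum (trunc a z) t ≤ Psum v t := Psum_le_Psum_of_le hle t
    rw [Psum_trunc] at h2
    omega
  · intro hv
    -- build u = v + (M - trunc a M)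
    set u : Mon n := fun i => v i + (M i - trunc a M i) with hu
    have htle : ∀ i, trunc a M i ≤ M i := trunc_le' a M
    have hPsumu : ∀ t, Psum u t = Psum v t + (Psum M t - min (Psum M t) a) := by
      intro t
      have h1 : Psum u t = Psum v t + Psum (fun i => M i - trunc a M i : Mon n) t := by
        unfold Psum
        rw [← Finset.sum_add_distrib]
      have h2 : Psum (fun i => M i - trunc a M i : Mon n) t
          = Psum M t - Psum (trunc a M) t := by
        unfold Psum
        exact Finset.sum_tsub_distrib _ (fun i _ => htle i)
      rw [h1, h2, Psum_trunc]
    have hprecu : ∀ t, Psum M t ≤ Psum u t := by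
      intro t
      have := hv t
      have := hPsumu t
      omega
    -- u₀ = trunc (deg M) u
    set u₀ := trunc (deg M) u with hu₀
    have hdegu : deg M ≤ Psum u n := by
      have h1 := hprecu n
      rw [← deg_eq_Psum] at h1
      exact h1
    have hdegu₀ : deg u₀ = deg M := by
      rw [deg_eq_Psum, hu₀, Psum_trunc]
      omega
    have hprecu₀ : ∀ t, Psum M t ≤ Psum u₀ t := by
      intro t
      rw [hu₀, Psum_trunc]
      have h1 := hprecu t
      have h2 := Psum_le_deg M t
      omega
    have hmem : u₀ ∈ borelCl {M} := mem_borelCl_of_prec hdegu₀ hprecu₀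
    refine ⟨u₀, hmem, ?_⟩
    -- trunc a u₀ ≤ v
    intro i
    show trunc a u₀ i ≤ v i
    rw [trunc_apply]
    rw [hu₀, Psum_trunc, Psum_trunc]
    have hmin : ∀ s, min (min (Psum u s) (deg M)) a = min (Psum u s) a := by
      intro s
      omega
    rw [hmin, hmin]
    have hA : Psum v (i.val+1) = Psum v i.val + v i := Psum_succ v i.val i.isLt
    have hU1 := hPsumu (i.val+1)
    have hU2 := hPsumu i.val
    have hv1 := hv (i.val+1)
    have hv2 := hv i.val
    have hmono : Psum M i.val ≤ Psum M (i.val+1) := Psum_mono M (Nat.le_succ _)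
    omega

end Trunc
section Psi
variable {n : ℕ}

lemma deg_psi (w : Fin n → ℕ) (u : Mon n) : deg (psi w u) = degW w u := rfl

lemma degW_eq_Psum (w : Fin n → ℕ) (u : Mon n) : degW w u = Psum (psi w u) n := by
  rw [← deg_eq_Psum, deg_psi]

lemma mem_preimage_iff (w : Fin n → ℕ) (m u : Mon n) {a : ℕ} (ha : a ≤ degW w m) :
    u ∈ psi w ⁻¹' truncIdeal a (borelCl {psi w m})
      ↔ ∀ t, min (Psum (psi w m) t) a ≤ Psum (psi w u) t := by
  rw [Set.mem_preimage, truncIdeal_eq (psi w m) a (by rw [deg_psi]; exact ha)]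
  rfl

lemma degW_zero (w : Fin n → ℕ) : degW w (0 : Mon n) = 0 := by
  unfold degW
  simp

lemma degW_strict_mono (w : Fin n → ℕ) (hpos : ∀ i, 0 < w i) {u v : Mon n}
    (h : v ≤ u) (hne : v ≠ u) : degW w v < degW w u := by
  unfold degW
  obtain ⟨i, hi⟩ := Function.ne_iff.mp hne
  apply Finset.sum_lt_sum (fun j _ => Nat.mul_le_mul_left _ (h j))
  exact ⟨i, Finset.mem_univ i, mul_lt_mul_of_pos_left (lt_of_le_of_ne (h i) hi) (hpos i)⟩

lemma eq_zero_of_degW_zero (w : Fin n → ℕ) (hpos : ∀ i, 0 < w i) {u : Mon n}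
    (h : degW w u = 0) : u = 0 := by
  funext i
  unfold degW at h
  rw [Finset.sum_eq_zero_iff] at h
  have h1 := h i (Finset.mem_univ i)
  have h2 := hpos i
  simp only [Pi.zero_apply]
  rcases Nat.mul_eq_zero.mp h1 with h3 | h3
  · omega
  · exact h3

lemma maxVar_zero : maxVar (0 : Mon n) = 0 := by
  unfold maxVar
  simp

lemma maxVar_pos_of_ne {u : Mon n} (h : u ≠ 0) : 1 ≤ maxVar u := by
  obtain ⟨i, hi⟩ := Function.ne_iff.mp h
  rw [show (1 : ℕ) = 0 + 1 by rfl, le_maxVar_iff]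
  exact ⟨i, Nat.zero_le _, by simpa using hi⟩

lemma maxVarOne_eq_maxVar {u : Mon n} (h : u ≠ 0) : maxVarOne u = maxVar u := by
  unfold maxVarOne
  have := maxVar_pos_of_ne h
  omega

lemma maxVar_apply_ne {u : Mon n} {b : Fin n} (h : maxVar u = b.val + 1) : u b ≠ 0 := by
  obtain ⟨i, hib, hi⟩ := (le_maxVar_iff u b.val).mp (le_of_eq h.symm)
  have h2 := (maxVar_le_iff u (b.val+1)).mp (le_of_eq h) i hi
  have : i = b := Fin.ext (by omega)
  rwa [← this]

lemma maxVar_supp {u : Mon n} {c : ℕ} (h : maxVar u ≤ c) : ∀ i : Fin n, u i ≠ 0 → i.val < c := by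
  intro i hi
  have := (maxVar_le_iff u c).mp h i hi
  omega

lemma maxVar_eq_of {u : Mon n} (b : Fin n) (hb : u b ≠ 0)
    (hsupp : ∀ i, u i ≠ 0 → i.val ≤ b.val) : maxVar u = b.val + 1 := by
  apply le_antisymm
  · rw [maxVar_le_iff]
    intro i hi
    have := hsupp i hi
    omega
  · rw [le_maxVar_iff]
    exact ⟨b, le_rfl, hb⟩

/-- The explicit description of the counted generator sets. -/
def GSet (w : Fin n → ℕ) (m : Mon n) (a c : ℕ) : Set (Mon n) :=
  {u | (∀ t, min (Psum (psi w m) t) a ≤ Psum (psi w u) t) ∧ degW w u = a ∧ maxVarOne u = c}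

lemma GSet_finite (w : Fin n → ℕ) (hpos : ∀ i, 0 < w i) (m : Mon n) (a c : ℕ) :
    (GSet w m a c).Finite := by
  apply Set.Finite.subset (Set.finite_Icc (0 : Mon n) (fun _ => a))
  rintro u ⟨_, hdeg, _⟩
  constructor
  · intro i
    exact Nat.zero_le _
  · intro i
    show u i ≤ a
    have h1 : w i * u i ≤ degW w u :=
      Finset.single_le_sum (f := fun j => w j * u j) (fun j _ => Nat.zero_le _) (Finset.mem_univ i)
    have h2 := hpos i
    have h3 : u i ≤ w i * u i := Nat.le_mul_of_pos_left _ h2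
    omega

lemma Psum_psi_stab (w : Fin n → ℕ) (u : Mon n) {c t : ℕ}
    (hsupp : ∀ i : Fin n, u i ≠ 0 → i.val < c) (hct : c ≤ t) :
    Psum (psi w u) t = degW w u := by
  unfold Psum degW
  rw [Finset.sum_subset (Finset.filter_subset _ _)]
  · rfl
  · intro i _ hi
    simp only [Finset.mem_filter, Finset.mem_univ, true_and, not_lt] at hi
    show w i * u i = 0
    by_cases hu0 : u i = 0
    · rw [hu0, Nat.mul_zero]
    · have := hsupp i hu0
      omega

end Psi

section AddB
variable {n : ℕ}

def addB (b : Fin n) (u : Mon n) : Mon n := fun i => if i = b then u i + 1 else u i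
def subB (b : Fin n) (u : Mon n) : Mon n := fun i => if i = b then u i - 1 else u i

lemma addB_inj (b : Fin n) : Function.Injective (addB b) := by
  intro u v h
  funext i
  have h2 := congrFun h i
  unfold addB at h2
  split_ifs at h2 <;> omega

lemma addB_subB (b : Fin n) (u : Mon n) (hb : u b ≠ 0) : addB b (subB b u) = u := by
  funext i
  unfold addB subB
  by_cases h : i = b
  · subst h
    simp only [if_pos rfl]
    simp
    omega
  · simp only [if_neg h]

lemma Psum_psi_addB (w : Fin n → ℕ) (b : Fin n) (u : Mon n) (t : ℕ) :
    Psum (psi w (addB b u)) t = Psum (psi w u) t + (if b.val < t then w b else 0) := by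
  unfold Psum
  have hterm : ∀ i ∈ Finset.univ.filter (fun i : Fin n => i.val < t),
      psi w (addB b u) i = psi w u i + (if i = b then w i else 0) := by
    intro i _
    unfold psi addB
    split_ifs with h
    · subst h
      ring
    · ring
  rw [Finset.sum_congr rfl hterm, Finset.sum_add_distrib, Finset.sum_ite_eq']
  by_cases hbt : b.val < t
  · rw [if_pos (by simp [hbt]), if_pos hbt]
  · rw [if_neg (by simp [hbt]), if_neg hbt]

lemma degW_addB (w : Fin n → ℕ) (b : Fin n) (u : Mon n) :
    degW w (addB b u) = degW w u + w b := by
  rw [degW_eq_Psum, degW_eq_Psum, Psum_psi_addB, if_pos b.isLt]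

lemma subB_supp {u : Mon n} {b : Fin n} {c : ℕ}
    (hsupp : ∀ i, u i ≠ 0 → i.val ≤ c) : ∀ i, subB b u i ≠ 0 → i.val ≤ c := by
  intro i hi
  apply hsupp
  unfold subB at hi
  split_ifs at hi with h
  · omega
  · exact hi

end AddB
section Step
variable {n : ℕ}

lemma guard_to_psum (w : Fin n → ℕ) (m : Mon n) {a' : ℕ} (b : Fin n)
    (hg : b.val + 1 ≤ maxVar (trunc (a'+1) (psi w m))) :
    ∀ t, t ≤ b.val → Psum (psi w m) t ≤ a' := by
  obtain ⟨i, hib, hi⟩ := (le_maxVar_iff _ _).mp hg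
  rw [trunc_apply] at hi
  have h1 : Psum (psi w m) i.val ≤ a' := by omega
  intro t ht
  have h2 := Psum_mono (psi w m) (show t ≤ i.val by omega)
  omega

lemma psum_to_guard (w : Fin n → ℕ) (m : Mon n) {a' : ℕ} (b : Fin n)
    (hlt : a' < degW w m) (h : ∀ t, t ≤ b.val → Psum (psi w m) t ≤ a') :
    b.val + 1 ≤ maxVar (trunc (a'+1) (psi w m)) := by
  classical
  have hdeg : Psum (psi w m) n = degW w m := (degW_eq_Psum w m).symm
  have hex : ∃ s, a'+1 ≤ Psum (psi w m) (s+1) := by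
    refine ⟨n, ?_⟩
    have : Psum (psi w m) (n+1) = Psum (psi w m) n := by
      rw [Psum_stab _ _ (by omega), Psum_stab _ _ le_rfl]
    omega
  set s1 := Nat.find hex with hs1def
  have hs1 : a'+1 ≤ Psum (psi w m) (s1+1) := Nat.find_spec hex
  have hPs1 : Psum (psi w m) s1 ≤ a' := by
    rcases Nat.eq_zero_or_pos s1 with h0 | h0
    · rw [h0, Psum_zero]
      omega
    · have := Nat.find_min hex (show s1 - 1 < s1 by omega)
      have heq : s1 - 1 + 1 = s1 := by omega
      rw [heq] at this
      omega
  have hs1n : s1 < n := by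
    by_contra hcon
    push_neg at hcon
    have h1 : Psum (psi w m) s1 = degW w m := by rw [Psum_stab _ _ hcon, deg_psi]
    omega
  have hbs1 : b.val ≤ s1 := by
    by_contra hcon
    push_neg at hcon
    have := h (s1+1) (by omega)
    omega
  rw [le_maxVar_iff]
  refine ⟨⟨s1, hs1n⟩, hbs1, ?_⟩
  rw [trunc_apply]
  simp only [Fin.val_mk]
  omega

lemma GSet_step (w : Fin n → ℕ) (m : Mon n) {a : ℕ} (b : Fin n)
    (hwb : w b ≤ a+1)
    (hguard : ∀ t, t ≤ b.val → Psum (psi w m) t ≤ a+1 - w b) :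
    GSet w m (a+1) (b.val+1)
      = addB b '' (⋃ k ∈ Finset.univ.filter (· ≤ b), GSet w m (a+1 - w b) (k.val+1)) := by
  ext u
  simp only [Set.mem_image, Set.mem_iUnion, Finset.mem_filter, Finset.mem_univ, true_and,
    exists_prop]
  constructor
  · rintro ⟨hmem, hdeg, hmax⟩
    have hune : u ≠ 0 := by
      intro h0
      rw [h0, degW_zero] at hdeg
      omega
    have hmaxu : maxVar u = b.val + 1 := by
      rw [← maxVarOne_eq_maxVar hune]
      exact hmax
    have hub : u b ≠ 0 := maxVar_apply_ne hmaxu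
    have hsupp : ∀ i, u i ≠ 0 → i.val ≤ b.val := by
      intro i hi
      have := (maxVar_le_iff u (b.val+1)).mp (le_of_eq hmaxu) i hi
      omega
    have hadd : addB b (subB b u) = u := addB_subB b u hub
    have hdegu' : degW w (subB b u) = a+1 - w b := by
      have h1 := degW_addB w b (subB b u)
      rw [hadd] at h1
      omega
    have hsuppu' : ∀ i, subB b u i ≠ 0 → i.val ≤ b.val := subB_supp hsupp
    have hmemu' : ∀ t, min (Psum (psi w m) t) (a+1-w b) ≤ Psum (psi w (subB b u)) t := by
      intro t
      rcases le_or_gt t b.val with h1 | h1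
      · have h2 : Psum (psi w u) t = Psum (psi w (subB b u)) t := by
          have h3 := Psum_psi_addB w b (subB b u) t
          rw [hadd, if_neg (by omega)] at h3
          omega
        have h4 := hmem t
        omega
      · have h2 : Psum (psi w (subB b u)) t = degW w (subB b u) :=
          Psum_psi_stab w _ (c := b.val+1) (fun i hi => by have := hsuppu' i hi; omega)
            (by omega)
        rw [h2, hdegu']
        omega
    have hmv1 : 1 ≤ maxVarOne (subB b u) := le_max_left _ _
    have hmvb : maxVarOne (subB b u) ≤ b.val + 1 := by
      unfold maxVarOne
      have h2 : maxVar (subB b u) ≤ b.val+1 :=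
        (maxVar_le_iff _ _).mpr (fun i hi => by have := hsuppu' i hi; omega)
      omega
    refine ⟨subB b u, ⟨⟨maxVarOne (subB b u) - 1, by omega⟩, ?_, ⟨hmemu', hdegu', ?_⟩⟩, hadd⟩
    · rw [Fin.le_def]
      simp only [Fin.val_mk]
      omega
    · simp only [Fin.val_mk]
      omega
  · rintro ⟨u', ⟨k, hkb, hmem', hdeg', hmax'⟩, rfl⟩
    have hkb' : k.val ≤ b.val := hkb
    have hsuppu' : ∀ i, u' i ≠ 0 → i.val ≤ k.val := by
      intro i hi
      have h2 : maxVar u' ≤ k.val+1 := by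
        unfold maxVarOne at hmax'
        omega
      have := (maxVar_le_iff u' (k.val+1)).mp h2 i hi
      omega
    have hsupp : ∀ i, addB b u' i ≠ 0 → i.val ≤ b.val := by
      intro i hi
      unfold addB at hi
      split_ifs at hi with h
      · rw [h]
      · have := hsuppu' i hi
        omega
    refine ⟨?_, ?_, ?_⟩
    · intro t
      rcases le_or_gt t b.val with h1 | h1
      · have h2 : Psum (psi w (addB b u')) t = Psum (psi w u') t := by
          rw [Psum_psi_addB, if_neg (by omega)]
          omega
        have h3 := hmem' t
        have h4 := hguard t h1
        omega
      · have h2 : Psum (psi w (addB b u')) t = degW w (addB b u') :=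
          Psum_psi_stab w _ (c := b.val+1) (fun i hi => by have := hsupp i hi; omega)
            (by omega)
        have h3 : degW w (addB b u') = degW w u' + w b := degW_addB w b u'
        rw [h2, h3, hdeg']
        have := Psum_le_deg (psi w m) t
        rw [deg_psi] at this
        omega
    · rw [degW_addB, hdeg']
      omega
    · have hb0 : addB b u' b ≠ 0 := by
        unfold addB
        simp
      have h2 : maxVar (addB b u') = b.val + 1 := maxVar_eq_of b hb0 hsupp
      unfold maxVarOne
      rw [h2]
      omega

lemma GSet_empty (w : Fin n → ℕ) (hpos : ∀ i, 0 < w i) (m : Mon n) {a : ℕ} (b : Fin n)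
    (ha : a+1 ≤ degW w m)
    (hfail : ¬(w b ≤ a+1 ∧ b.val + 1 ≤ maxVar (trunc (a+1-w b+1) (psi w m)))) :
    GSet w m (a+1) (b.val+1) = ∅ := by
  ext u
  simp only [Set.mem_empty_iff_false, iff_false]
  rintro ⟨hmem, hdeg, hmax⟩
  have hune : u ≠ 0 := by
    intro h0
    rw [h0, degW_zero] at hdeg
    omega
  have hmaxu : maxVar u = b.val + 1 := by
    rw [← maxVarOne_eq_maxVar hune]
    exact hmax
  have hub : 1 ≤ u b := Nat.pos_of_ne_zero (maxVar_apply_ne hmaxu)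
  have hwbu : w b ≤ w b * u b := Nat.le_mul_of_pos_right _ hub
  have hsingle : w b * u b ≤ degW w u :=
    Finset.single_le_sum (f := fun j => w j * u j) (fun j _ => Nat.zero_le _) (Finset.mem_univ b)
  have hwb : w b ≤ a+1 := by omega
  have hmg : ¬ (b.val + 1 ≤ maxVar (trunc (a+1-w b+1) (psi w m))) := by tauto
  have hwpos := hpos b
  apply hmg
  apply psum_to_guard w m b (by omega)
  intro t ht
  have h1 := hmem t
  have h2 := Psum_mono (psi w u) (show t ≤ b.val from ht)
  have h3 : Psum (psi w u) (b.val+1) = Psum (psi w u) b.val + w b * u b :=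
    Psum_succ (psi w u) b.val b.isLt
  have h4 : Psum (psi w u) (b.val+1) ≤ degW w u := by
    rw [degW_eq_Psum]
    exact Psum_mono _ b.isLt
  omega

end Step
section Main
variable {n : ℕ}

lemma ncard_biUnion_eq {α ι : Type*} [DecidableEq ι] (s : Finset ι) (f : ι → Set α)
    (hfin : ∀ i ∈ s, (f i).Finite)
    (hdisj : ∀ i ∈ s, ∀ j ∈ s, i ≠ j → Disjoint (f i) (f j)) :
    (⋃ i ∈ s, f i).ncard = ∑ i ∈ s, (f i).ncard := by
  induction s using Finset.induction with
  | empty => simp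
  | @insert a s ha ih =>
    have hfa : (f a).Finite := hfin a (Finset.mem_insert_self a s)
    have hfu : (⋃ i ∈ s, f i).Finite := by
      apply Set.Finite.biUnion (Finset.finite_toSet s)
      intro i hi
      exact hfin i (Finset.mem_insert_of_mem hi)
    have hd : Disjoint (f a) (⋃ i ∈ s, f i) := by
      rw [Set.disjoint_iUnion_right]
      intro i
      rw [Set.disjoint_iUnion_right]
      intro hi
      exact hdisj a (Finset.mem_insert_self a s) i (Finset.mem_insert_of_mem hi)
        (fun h => ha (h ▸ hi))
    have hun : (⋃ i ∈ insert a s, f i) = f a ∪ ⋃ i ∈ (s : Finset ι), f i := by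
      simp [Set.biUnion_insert]
    rw [Finset.sum_insert ha, hun, Set.ncard_union_eq hd hfa hfu,
      ih (fun i hi => hfin i (Finset.mem_insert_of_mem hi))
        (fun i hi j hj hij => hdisj i (Finset.mem_insert_of_mem hi) j
          (Finset.mem_insert_of_mem hj) hij)]

lemma GSet_disjoint (w : Fin n → ℕ) (m : Mon n) (a : ℕ) {c c' : ℕ} (h : c ≠ c') :
    Disjoint (GSet w m a c) (GSet w m a c') := by
  rw [Set.disjoint_left]
  rintro u ⟨_, _, h1⟩ ⟨_, _, h2⟩
  exact h (h1 ▸ h2 ▸ rfl)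

lemma catalan_eq (w : Fin n → ℕ) (hpos : ∀ i, 0 < w i) (m : Mon n) :
    ∀ a : ℕ, a ≤ degW w m → ∀ b : Fin n,
      catalanEntry w m a b = (GSet w m a (b.val+1)).ncard := by
  intro a
  induction a using Nat.strong_induction_on with
  | _ a IH =>
    intro ha b
    cases a with
    | zero =>
      rw [catalanEntry]
      by_cases hb : b.val = 0
      · rw [if_pos hb]
        have hset : GSet w m 0 (b.val+1) = {0} := by
          ext u
          constructor
          · rintro ⟨_, hdeg, _⟩
            exact eq_zero_of_degW_zero w hpos hdeg
          · rintro rfl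
            refine ⟨fun t => by omega, degW_zero w, ?_⟩
            show maxVarOne (0 : Mon n) = b.val + 1
            unfold maxVarOne
            rw [maxVar_zero, hb]
            simp
        rw [hset, Set.ncard_singleton]
      · rw [if_neg hb]
        have hset : GSet w m 0 (b.val+1) = ∅ := by
          ext u
          simp only [Set.mem_empty_iff_false, iff_false]
          rintro ⟨_, hdeg, hmax⟩
          have h0 : u = 0 := eq_zero_of_degW_zero w hpos hdeg
          rw [h0] at hmax
          unfold maxVarOne at hmax
          rw [maxVar_zero] at hmax
          omega
        rw [hset, Set.ncard_empty]
    | succ a =>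
      rw [catalanEntry]
      split_ifs with hg
      · obtain ⟨hw0, hwb, hlt, hmv⟩ := hg
        have hguard : ∀ t, t ≤ b.val → Psum (psi w m) t ≤ a+1 - w b :=
          guard_to_psum w m b hmv
        rw [GSet_step w m b hwb hguard]
        rw [Set.ncard_image_of_injective _ (addB_inj b)]
        rw [ncard_biUnion_eq _ _ (fun k _ => GSet_finite w hpos m _ _)
          (fun i _ j _ hij => GSet_disjoint w m _ (fun h => hij (Fin.ext (by omega))))]
        apply Finset.sum_congr rfl
        intro k _
        exact IH (a+1-w b) (by omega) (by omega) k
      · push_neg at hg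
        have hfail : ¬(w b ≤ a+1 ∧ b.val + 1 ≤ maxVar (trunc (a+1-w b+1) (psi w m))) := by
          rintro ⟨h1, h2⟩
          have hw := hpos b
          have := hg hw h1 (by omega)
          omega
        rw [GSet_empty w hpos m b ha hfail, Set.ncard_empty]

end Main

/-- For `1 ≤ a ≤ deg_w(m)`, the Catalan diagram entry `C_{w,m}(a, b)`
(column `b : Fin n` is the 1-based column `b+1`) equals
`q_{b+1}^a(ψ⁻¹(trunc_a(Borel(ψ(m)))))`, the number of degree-`a` minimal monomial
generators of `ψ⁻¹(trunc_a(Borel(ψ(m))))` with maximal variable index `b+1`. -/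
theorem stmt18 {n : ℕ} (w : Fin n → ℕ) (hpos : ∀ i, 0 < w i) (hmono : Antitone w) (m : Mon n) (a : ℕ) (b : Fin n)
    (ha1 : 1 ≤ a) (ha2 : a ≤ degW w m) :
    catalanEntry w m a b
      = {u ∈ minGens (psi w ⁻¹' truncIdeal a (borelCl {psi w m})) |
          degW w u = a ∧ maxVar u = b.val + 1}.ncard := by
  rw [catalan_eq w hpos m a ha2 b]
  congr 1
  ext u
  show (∀ t, min (Psum (psi w m) t) a ≤ Psum (psi w u) t) ∧ degW w u = a ∧ maxVarOne u = b.val+1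
    ↔ _
  simp only [Set.mem_setOf_eq, minGens]
  constructor
  · rintro ⟨hmem, hdeg, hmax⟩
    have hune : u ≠ 0 := by
      intro h0
      rw [h0, degW_zero] at hdeg
      omega
    have hmax' : maxVar u = b.val + 1 := by
      rw [← maxVarOne_eq_maxVar hune]
      exact hmax
    have humem : u ∈ psi w ⁻¹' truncIdeal a (borelCl {psi w m}) :=
      (mem_preimage_iff w m u ha2).mpr hmem
    refine ⟨⟨humem, ?_⟩, hdeg, hmax'⟩
    intro v hv hle
    by_contra hne
    have h1 : degW w v < degW w u := degW_strict_mono w hpos hle hne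
    have h2 := (mem_preimage_iff w m v ha2).mp hv n
    rw [← degW_eq_Psum, ← degW_eq_Psum] at h2
    omega
  · rintro ⟨⟨humem, _⟩, hdeg, hmax⟩
    have hune : u ≠ 0 := by
      intro h0
      rw [h0, degW_zero] at hdeg
      omega
    exact ⟨(mem_preimage_iff w m u ha2).mp humem, hdeg, by
      rw [maxVarOne_eq_maxVar hune]; exact hmax⟩
end
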